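/- arXiv:2205.13615 — 2 statements merged into one kernel-verified Lean document; each statement's English description precedes it below -/
import Mathlib

section
/- Lemma 2.6: Assume (BR) with constant branching ratio ρ ∈ (1,∞), and assume the offspring distributions satisfy the uniform first moment condition: there is a probability measure π on ℕ with finite first moment such that π_x({k : k ≥ n}) ≤ π({k : k ≥ n}) for all x ∈ X, n ∈ ℕ. Then there exists s₀ > 0 such that for every probability measure Θ on M and every s ∈ [0, s₀], ∫_M (∫_M e^{−s‖m'‖} dK(m)(m')) dΘ(m) ≤ ∫_M e^{−ρ s‖m‖} dΘ(m) + (∫_M ‖m‖ dΘ(m)) · R_π(s), where both sides are interpreted in [0,∞] and R_π is the remainder function of π. -/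
open MeasureTheory ProbabilityTheory Filter Topology
open scoped ENNReal NNReal Classical

namespace BMC

variable {X : Type*}

/-- the population space `X →₀ ℕ` over a countable set carries the discrete σ-algebra -/
instance : MeasurableSpace (X →₀ ℕ) := ⊤

/-- size (total mass) of a population -/
def popSize (m : X →₀ ℕ) : ℕ := m.sum fun _ k => k

/-- convolution of measures on populations: pushforward of the product measure under addition -/
noncomputable def popConv (μ ν : Measure (X →₀ ℕ)) : Measure (X →₀ ℕ) :=
  (μ.prod ν).map fun p => p.1 + p.2

/-- the remainder function `R_θ(s) = Σ_k θ(k)·ψ(s·k)`, where `ψ(t) = e^{−t} − 1 + t` -/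
noncomputable def remFn (θ : Measure ℕ) (s : ℝ) : ℝ :=
  ∑' k : ℕ, (θ {k}).toReal * (Real.exp (-(s * k)) - 1 + s * k)

/-! Write `e^{-sk} = 1 - sk + ψ(sk)`. Integrating against `Π_x`, whose mean size is `ρ`, gives
`G_{Π_x}(s) = 1 - ρs + E ψ(s‖m‖) ≤ e^{-ρs} + R_π(s)`, the last step by the layer-cake formula and
the tail domination of `π_x` by `π`. Since `K(m)` is the convolution of the `Π_x` over the
individuals of `m`, its Laplace transform is a product of `‖m‖` such factors, each also at most `1`;
with `a = e^{-ρs} ≤ 1` such a product is at most `a^‖m‖ + ‖m‖ R_π(s)`. Integrating over `Θ`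
concludes. -/

noncomputable def psi (t : ℝ) : ℝ := Real.exp (-t) - 1 + t

lemma one_le_exp_neg_add (t : ℝ) : 1 ≤ Real.exp (-t) + t := by
  linarith [Real.add_one_le_exp (-t)]

lemma psi_nonneg (t : ℝ) : 0 ≤ psi t := by
  rw [psi]; linarith [one_le_exp_neg_add t]

lemma psi_le_self {t : ℝ} (ht : 0 ≤ t) : psi t ≤ t := by
  rw [psi]; linarith [Real.exp_le_one_iff.mpr (neg_nonpos.mpr ht)]

lemma psi_monotoneOn : MonotoneOn psi (Set.Ici 0) := by
  intro a ha b _ hab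
  have hdiff : Real.exp (-a) - Real.exp (-b) ≤ b - a :=
    calc Real.exp (-a) - Real.exp (-b) = Real.exp (-a) * (1 - Real.exp (-(b - a))) := by
          rw [mul_sub, ← Real.exp_add]; ring_nf
      _ ≤ 1 * (b - a) :=
          mul_le_mul (Real.exp_le_one_iff.mpr (neg_nonpos.mpr ha))
            (by linarith [Real.add_one_le_exp (-(b - a))])
            (sub_nonneg.mpr (Real.exp_le_one_iff.mpr (by linarith))) zero_le_one
      _ = b - a := one_mul _
  simp only [psi]; linarith

lemma ofReal_psi_eq_sum_range {s : ℝ} (hs : 0 ≤ s) (k : ℕ) :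
    ENNReal.ofReal (psi (s * k))
      = ∑ n ∈ Finset.range k, ENNReal.ofReal (psi (s * (n + 1 : ℕ)) - psi (s * n)) := by
  have hmono : Monotone fun n : ℕ => psi (s * n) := fun m n hmn =>
    psi_monotoneOn (Set.mem_Ici.mpr (by positivity)) (Set.mem_Ici.mpr (by positivity)) (by gcongr)
  rw [← ENNReal.ofReal_sum_of_nonneg fun n _ => sub_nonneg.mpr (hmono n.le_succ),
    Finset.sum_range_sub (fun n : ℕ => psi (s * n))]
  simp [psi]

section

variable {α β : Type*} [MeasurableSpace α] [MeasurableSpace β]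

lemma lintegral_sum_range_eq_tsum (μ : Measure α) {N : α → ℕ} (hN : Measurable N)
    (g : ℕ → ℝ≥0∞) :
    ∫⁻ a, ∑ n ∈ Finset.range (N a), g n ∂μ = ∑' n, g n * μ {a | n < N a} := by
  have hmeas : ∀ n, MeasurableSet {a | n < N a} := fun n => hN measurableSet_Ioi
  have hind : ∀ a, ∑ n ∈ Finset.range (N a), g n
      = ∑' n, {a | n < N a}.indicator (fun _ => g n) a := fun a => by
    rw [tsum_eq_sum (s := Finset.range (N a)) fun n hn =>
      Set.indicator_of_notMem (by simpa using hn) _]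
    exact Finset.sum_congr rfl fun n hn => (Set.indicator_of_mem
      (show a ∈ {a | n < N a} from Finset.mem_range.mp hn) fun _ => g n).symm
  simp_rw [hind]
  rw [lintegral_tsum fun n => (measurable_const.indicator (hmeas n)).aemeasurable]
  exact tsum_congr fun n => lintegral_indicator_const (hmeas n) _

lemma lintegral_sum_range_le_of_tail_le {μ : Measure α} {ν : Measure β} {N : α → ℕ}
    {M : β → ℕ} (hN : Measurable N) (hM : Measurable M) (g : ℕ → ℝ≥0∞)
    (htail : ∀ n, μ {a | n < N a} ≤ ν {b | n < M b}) :
    ∫⁻ a, ∑ n ∈ Finset.range (N a), g n ∂μ ≤ ∫⁻ b, ∑ n ∈ Finset.range (M b), g n ∂ν := by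
  rw [lintegral_sum_range_eq_tsum μ hN, lintegral_sum_range_eq_tsum ν hM]
  exact ENNReal.tsum_le_tsum fun n => by gcongr; exact htail n

lemma lintegral_psi_le_of_tail_le {μ : Measure α} {ν : Measure β} {N : α → ℕ} {M : β → ℕ}
    (hN : Measurable N) (hM : Measurable M) (htail : ∀ n, μ {a | n < N a} ≤ ν {b | n < M b})
    {s : ℝ} (hs : 0 ≤ s) :
    ∫⁻ a, ENNReal.ofReal (psi (s * N a)) ∂μ ≤ ∫⁻ b, ENNReal.ofReal (psi (s * M b)) ∂ν := by
  simp_rw [ofReal_psi_eq_sum_range hs]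
  exact lintegral_sum_range_le_of_tail_le hN hM _ htail

lemma lintegral_exp_neg_le_add_lintegral_psi (μ : Measure α) [IsProbabilityMeasure μ]
    {N : α → ℕ} (hN : Measurable N) {ρ : ℝ} (hmean : ∫⁻ a, (N a : ℝ≥0∞) ∂μ = ENNReal.ofReal ρ)
    {s : ℝ} (hs : 0 ≤ s) :
    ∫⁻ a, ENNReal.ofReal (Real.exp (-(s * N a))) ∂μ
      ≤ ENNReal.ofReal (Real.exp (-(ρ * s))) + ∫⁻ a, ENNReal.ofReal (psi (s * N a)) ∂μ := by
  have hNreal : Measurable fun a => (N a : ℝ) := measurable_from_nat.comp hN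
  have hNennreal : Measurable fun a => (N a : ℝ≥0∞) := measurable_from_nat.comp hN
  have hsmean : ∫⁻ a, ENNReal.ofReal (s * N a) ∂μ = ENNReal.ofReal (ρ * s) := by
    simp_rw [ENNReal.ofReal_mul hs, ENNReal.ofReal_natCast]
    rw [lintegral_const_mul _ hNennreal, hmean, ← ENNReal.ofReal_mul hs, mul_comm]
  have hpoint : ∀ a, ENNReal.ofReal (Real.exp (-(s * N a))) + ENNReal.ofReal (s * N a)
      = 1 + ENNReal.ofReal (psi (s * N a)) := fun a => by
    rw [← ENNReal.ofReal_add (Real.exp_nonneg _) (by positivity), ← ENNReal.ofReal_one,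
      ← ENNReal.ofReal_add zero_le_one (psi_nonneg _), psi]
    ring_nf
  have hsum : ∫⁻ a, ENNReal.ofReal (Real.exp (-(s * N a))) ∂μ + ENNReal.ofReal (ρ * s)
      = 1 + ∫⁻ a, ENNReal.ofReal (psi (s * N a)) ∂μ := by
    rw [← hsmean, ← lintegral_add_right _ (hNreal.const_mul s).ennreal_ofReal]
    simp_rw [hpoint]
    rw [lintegral_add_left measurable_const, lintegral_one, measure_univ]
  have hone : 1 ≤ ENNReal.ofReal (Real.exp (-(ρ * s))) + ENNReal.ofReal (ρ * s) :=
    calc (1 : ℝ≥0∞) = ENNReal.ofReal 1 := ENNReal.ofReal_one.symm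
      _ ≤ ENNReal.ofReal (Real.exp (-(ρ * s)) + ρ * s) :=
          ENNReal.ofReal_le_ofReal (one_le_exp_neg_add _)
      _ ≤ _ := ENNReal.ofReal_add_le
  rw [← ENNReal.add_le_add_iff_right (a := ENNReal.ofReal (ρ * s)) ENNReal.ofReal_ne_top, hsum]
  calc 1 + ∫⁻ a, ENNReal.ofReal (psi (s * N a)) ∂μ
      ≤ ENNReal.ofReal (Real.exp (-(ρ * s))) + ENNReal.ofReal (ρ * s)
          + ∫⁻ a, ENNReal.ofReal (psi (s * N a)) ∂μ := by gcongr
    _ = _ := by ring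

end

lemma lintegral_psi_le_mul_lintegral (θ : Measure ℕ) {s : ℝ} (hs : 0 ≤ s) :
    ∫⁻ k, ENNReal.ofReal (psi (s * k)) ∂θ ≤ ENNReal.ofReal s * ∫⁻ k, (k : ℝ≥0∞) ∂θ := by
  rw [← lintegral_const_mul _ Measurable.of_discrete]
  refine lintegral_mono fun k => ?_
  rw [← ENNReal.ofReal_natCast, ← ENNReal.ofReal_mul hs]
  exact ENNReal.ofReal_le_ofReal (psi_le_self (by positivity))

lemma ofReal_remFn {θ : Measure ℕ} {s : ℝ} (h : ∫⁻ k, ENNReal.ofReal (psi (s * k)) ∂θ ≠ ∞) :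
    ENNReal.ofReal (remFn θ s) = ∫⁻ k, ENNReal.ofReal (psi (s * k)) ∂θ := by
  rw [lintegral_countable'] at h ⊢
  rw [← ENNReal.ofReal_toReal h, ENNReal.tsum_toReal_eq (ENNReal.ne_top_of_tsum_ne_top h)]
  congr 1
  refine tsum_congr fun k => ?_
  rw [ENNReal.toReal_mul, ENNReal.toReal_ofReal (psi_nonneg _), mul_comm, psi]

lemma _root_.Finsupp.induction_single_one {p : (X →₀ ℕ) → Prop} (h0 : p 0)
    (hadd : ∀ x m, p m → p (Finsupp.single x 1 + m)) (m : X →₀ ℕ) : p m := by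
  rw [← Finsupp.toMultiset_toFinsupp m]
  induction Finsupp.toMultiset m using Multiset.induction_on with
  | empty => simpa using h0
  | cons x s ih =>
    rw [← Multiset.singleton_add, Multiset.toFinsupp_add, Multiset.toFinsupp_singleton]
    exact hadd x _ ih

lemma popSize_zero : popSize (0 : X →₀ ℕ) = 0 := rfl

lemma popSize_add (m m' : X →₀ ℕ) : popSize (m + m') = popSize m + popSize m' :=
  Finsupp.sum_add_index' (fun _ => rfl) (fun _ _ _ => rfl)

lemma popSize_single (x : X) (n : ℕ) : popSize (Finsupp.single x n) = n :=
  Finsupp.sum_single_index rfl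

/-- `G_μ(s)` in the paper's notation. -/
noncomputable def popLaplace (μ : Measure (X →₀ ℕ)) (s : ℝ) : ℝ≥0∞ :=
  ∫⁻ m, ENNReal.ofReal (Real.exp (-(s * popSize m))) ∂μ

lemma popLaplace_le_one (μ : Measure (X →₀ ℕ)) [IsProbabilityMeasure μ] {s : ℝ} (hs : 0 ≤ s) :
    popLaplace μ s ≤ 1 :=
  calc popLaplace μ s ≤ ∫⁻ _, 1 ∂μ := lintegral_mono fun m => ENNReal.ofReal_le_one.mpr
        (Real.exp_le_one_iff.mpr (neg_nonpos.mpr (by positivity)))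
    _ = 1 := by rw [lintegral_one, measure_univ]

lemma popLaplace_popConv [Countable X] (μ ν : Measure (X →₀ ℕ)) [SFinite μ] [SFinite ν]
    (s : ℝ) : popLaplace (popConv μ ν) s = popLaplace μ s * popLaplace ν s := by
  have hmul : ∀ m m' : X →₀ ℕ, ENNReal.ofReal (Real.exp (-(s * popSize (m + m'))))
      = ENNReal.ofReal (Real.exp (-(s * popSize m)))
        * ENNReal.ofReal (Real.exp (-(s * popSize m'))) := fun m m' => by
    rw [← ENNReal.ofReal_mul (Real.exp_nonneg _), ← Real.exp_add, popSize_add]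
    push_cast; ring_nf
  rw [popLaplace, popConv, lintegral_map Measurable.of_discrete Measurable.of_discrete,
    lintegral_prod _ Measurable.of_discrete.aemeasurable]
  simp_rw [hmul, lintegral_const_mul _ Measurable.of_discrete]
  exact lintegral_mul_const _ Measurable.of_discrete

lemma ofReal_exp_neg_pow (t : ℝ) (n : ℕ) :
    ENNReal.ofReal (Real.exp (-t)) ^ n = ENNReal.ofReal (Real.exp (-(t * n))) := by
  rw [← ENNReal.ofReal_pow (Real.exp_nonneg _), ← Real.exp_nat_mul]
  ring_nf

lemma popLaplace_kernel_le_pow_add [Countable X] (K : Kernel (X →₀ ℕ) (X →₀ ℕ))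
    [IsMarkovKernel K] (hK0 : K 0 = Measure.dirac 0)
    (hKadd : ∀ m m', K (m + m') = popConv (K m) (K m'))
    {s : ℝ} (hs : 0 ≤ s) {a R : ℝ≥0∞} (ha : a ≤ 1)
    (hsingle : ∀ x, popLaplace (K (Finsupp.single x 1)) s ≤ a + R) (m : X →₀ ℕ) :
    popLaplace (K m) s ≤ a ^ popSize m + popSize m * R := by
  induction m using Finsupp.induction_single_one with
  | h0 => simp [popLaplace, hK0, popSize_zero]
  | hadd x m ih =>
    rw [hKadd, popLaplace_popConv, popSize_add, popSize_single]
    have hle_one := popLaplace_le_one (K m) hs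
    calc popLaplace (K (Finsupp.single x 1)) s * popLaplace (K m) s
        ≤ (a + R) * popLaplace (K m) s := by gcongr; exact hsingle x
      _ ≤ a * (a ^ popSize m + popSize m * R) + R * 1 := by
          rw [add_mul]; gcongr
      _ = a ^ (1 + popSize m) + a * (popSize m * R) + R := by ring
      _ ≤ a ^ (1 + popSize m) + 1 * (popSize m * R) + R := by gcongr
      _ = a ^ (1 + popSize m) + ↑(1 + popSize m) * R := by push_cast; ring

theorem laplace_transform_bound_general [Countable X]
    (Pibr : X → Measure (X →₀ ℕ)) (hPibr : ∀ x, IsProbabilityMeasure (Pibr x))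
    (K : Kernel (X →₀ ℕ) (X →₀ ℕ)) [IsMarkovKernel K]
    (hK0 : K 0 = Measure.dirac 0)
    (hKs : ∀ x : X, K (Finsupp.single x 1) = Pibr x)
    (hKadd : ∀ m m' : X →₀ ℕ, K (m + m') = popConv (K m) (K m'))
    (ρ : ℝ) (hρ : 1 < ρ)
    (hBR : ∀ x : X, ∫⁻ m, (popSize m : ℝ≥0∞) ∂(Pibr x) = ENNReal.ofReal ρ)
    -- uniform first moment condition: π has finite first moment and dominates every π_x
    (π : Measure ℕ)
    (hπmom : ∫⁻ k : ℕ, (k : ℝ≥0∞) ∂π ≠ ⊤)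
    (hdom : ∀ (x : X) (n : ℕ), Pibr x {m | n ≤ popSize m} ≤ π {k | n ≤ k}) :
    ∃ s₀ > (0 : ℝ), ∀ Θ : Measure (X →₀ ℕ), IsProbabilityMeasure Θ →
      ∀ s ∈ Set.Icc (0 : ℝ) s₀,
        ∫⁻ m, (∫⁻ m', ENNReal.ofReal (Real.exp (-(s * popSize m'))) ∂(K m)) ∂Θ
          ≤ (∫⁻ m, ENNReal.ofReal (Real.exp (-(ρ * s * popSize m))) ∂Θ)
            + (∫⁻ m, (popSize m : ℝ≥0∞) ∂Θ) * ENNReal.ofReal (remFn π s) := by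
  refine ⟨1, one_pos, fun Θ _ s ⟨hs, _⟩ => ?_⟩
  set a := ENNReal.ofReal (Real.exp (-(ρ * s)))
  set R := ENNReal.ofReal (remFn π s)
  have ha : a ≤ 1 := ENNReal.ofReal_le_one.mpr
    (Real.exp_le_one_iff.mpr (neg_nonpos.mpr (mul_nonneg (by linarith) hs)))
  have hR : R = ∫⁻ k, ENNReal.ofReal (psi (s * k)) ∂π := ofReal_remFn <|
    ne_top_of_le_ne_top (ENNReal.mul_ne_top ENNReal.ofReal_ne_top hπmom)
      (lintegral_psi_le_mul_lintegral π hs)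
  have hsingle : ∀ x, popLaplace (K (Finsupp.single x 1)) s ≤ a + R := fun x => by
    rw [hKs, hR]
    refine (lintegral_exp_neg_le_add_lintegral_psi (Pibr x) Measurable.of_discrete (hBR x)
      hs).trans ?_
    gcongr
    exact lintegral_psi_le_of_tail_le Measurable.of_discrete measurable_id
      (fun n => hdom x (n + 1)) hs
  calc ∫⁻ m, popLaplace (K m) s ∂Θ
      ≤ ∫⁻ m, (a ^ popSize m + popSize m * R) ∂Θ :=
        lintegral_mono (popLaplace_kernel_le_pow_add K hK0 hKadd hs ha hsingle)
    _ = _ := by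
        rw [lintegral_add_left Measurable.of_discrete, lintegral_mul_const _ Measurable.of_discrete]
        simp_rw [a, ofReal_exp_neg_pow]

/-- Lemma 2.6. Under (BR) with `ρ ∈ (1,∞)` and the uniform first moment
condition with dominating measure `π`, there is `s₀ > 0` such that for every probability
measure `Θ` on the population space and all `s ∈ [0,s₀]`,
`G_{ΘP}(s) ≤ G_Θ(ρs) + Θ̄·R_π(s)` (in `[0,∞]`). -/
theorem laplace_transform_bound [Countable X]
    (Pibr : X → Measure (X →₀ ℕ)) (hPibr : ∀ x, IsProbabilityMeasure (Pibr x))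
    (K : Kernel (X →₀ ℕ) (X →₀ ℕ)) [IsMarkovKernel K]
    (hK0 : K 0 = Measure.dirac 0)
    (hKs : ∀ x : X, K (Finsupp.single x 1) = Pibr x)
    (hKadd : ∀ m m' : X →₀ ℕ, K (m + m') = popConv (K m) (K m'))
    (ρ : ℝ) (hρ : 1 < ρ)
    (hBR : ∀ x : X, ∫⁻ m, (popSize m : ℝ≥0∞) ∂(Pibr x) = ENNReal.ofReal ρ)
    -- uniform first moment condition: π has finite first moment and dominates every π_x
    (π : Measure ℕ) (hπ : IsProbabilityMeasure π)
    (hπmom : ∫⁻ k : ℕ, (k : ℝ≥0∞) ∂π ≠ ⊤)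
    (hdom : ∀ (x : X) (n : ℕ), Pibr x {m | n ≤ popSize m} ≤ π {k | n ≤ k}) :
    ∃ s₀ > (0 : ℝ), ∀ Θ : Measure (X →₀ ℕ), IsProbabilityMeasure Θ →
      ∀ s ∈ Set.Icc (0 : ℝ) s₀,
        ∫⁻ m, (∫⁻ m', ENNReal.ofReal (Real.exp (-(s * popSize m'))) ∂(K m)) ∂Θ
          ≤ (∫⁻ m, ENNReal.ofReal (Real.exp (-(ρ * s * popSize m))) ∂Θ)
            + (∫⁻ m, (popSize m : ℝ≥0∞) ∂Θ) * ENNReal.ofReal (remFn π s) :=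
  laplace_transform_bound_general Pibr hPibr K hK0 hKs hKadd ρ hρ hBR π hπmom hdom

end BMC
end

section
/- Corollary 4.7 (harmonic martingales): Assume (BR) with constant branching ratio ρ ∈ (1,∞). Let (f_n)_{n≥0} be a uniformly bounded sequence of functions f_n : X → ℝ which is space-time harmonic for the base chain: f_n(x) = Σ_{y∈X} p(x,y)·f_{n+1}(y) for all x ∈ X, n ≥ 0. Then the functions g_n(m) = ρ^{−n}·⟨m, f_n⟩ on M satisfy ∫_M g_{n+1}(m') dK(m)(m') = g_n(m) for all m ∈ M and n ≥ 0; consequently, for every initial population m, the sequence W^f_n = ρ^{−n}·⟨M_n, f_n⟩ is a martingale under ℙ_m with respect to the coordinate filtration. -/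
/-!
The branching property makes `m ↦ ∫ h d(K m)` additive for every additive observable `h`, so
the one-step mean of `⟨·, f⟩` is computed one individual at a time: an individual at `x`
contributes `∑ y, (∫ a y dΠ_x) f y = ρ • ∑ y, p(x,y) f y`. Space-time harmonicity of `(f n)`
therefore gives `∫ g_{n+1} dK(m) = g_n(m)`. The cylinder probabilities identify the joint law
of `(M_0, …, M_n)` and `M_{n+1}` with the law of the prefix composed with `K(M_n)`, so
`g_n(M_n)` is a martingale for every space-time harmonic `g` of the chain; integrability comes
from `E‖M_n‖ = ρ^n ‖m‖`.
-/

open MeasureTheory ProbabilityTheory Filter Topology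
open scoped ENNReal NNReal Classical

namespace BMC

variable {X : Type*}

def coordFil (Y : Type*) [mY : MeasurableSpace Y] :
    Filtration ℕ (MeasurableSpace.pi : MeasurableSpace (ℕ → Y)) where
  seq n := ⨆ i ∈ Set.Iic n, MeasurableSpace.comap (fun ω : ℕ → Y => ω i) mY
  mono' a b hab := biSup_mono fun i (hi : i ≤ a) => hi.trans hab
  le' n := iSup₂_le fun i _ => measurable_iff_comap_le.mp (measurable_pi_apply i)

instance : MeasurableSingletonClass (X →₀ ℕ) :=
  ⟨fun _ => MeasurableSpace.measurableSet_top⟩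

noncomputable def pairing {R : Type*} [NonAssocSemiring R] (f : X → R) : (X →₀ ℕ) →+ R :=
  Finsupp.liftAddHom fun x => (AddMonoidHom.mulRight (f x)).comp (Nat.castAddMonoidHom R)

theorem pairing_apply {R : Type*} [NonAssocSemiring R] (f : X → R) (m : X →₀ ℕ) :
    pairing f m = m.sum fun x k => (k : R) * f x :=
  rfl

theorem natCast_popSize {R : Type*} [NonAssocSemiring R] (m : X →₀ ℕ) :
    (popSize m : R) = pairing (fun _ => 1) m := by
  simp [popSize, pairing_apply, Nat.cast_finsupp_sum]

structure IsBranchingKernel (K : Kernel (X →₀ ℕ) (X →₀ ℕ)) : Prop where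
  map_zero : K 0 = Measure.dirac 0
  map_add : ∀ m m', K (m + m') = popConv (K m) (K m')

theorem IsBranchingKernel.apply_eq_sum {K : Kernel (X →₀ ℕ) (X →₀ ℕ)} (hK : IsBranchingKernel K)
    {R : Type*} [AddCommMonoid R] (Φ : Measure (X →₀ ℕ) → R) (h0 : Φ (Measure.dirac 0) = 0)
    (hadd : ∀ m m', Φ (popConv (K m) (K m')) = Φ (K m) + Φ (K m')) (m : X →₀ ℕ) :
    Φ (K m) = m.sum fun x k => k • Φ (K (Finsupp.single x 1)) := by
  let F : (X →₀ ℕ) →+ R :=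
    { toFun m := Φ (K m)
      map_zero' := by rw [hK.map_zero, h0]
      map_add' m m' := by rw [hK.map_add, hadd] }
  let G : (X →₀ ℕ) →+ R :=
    Finsupp.liftAddHom fun x => multiplesHom R (Φ (K (Finsupp.single x 1)))
  suffices F = G from DFunLike.congr_fun this m
  ext x
  simp [F, G]

section Convolution

variable [Countable X] (μ ν : Measure (X →₀ ℕ)) [IsProbabilityMeasure μ] [IsProbabilityMeasure ν]

theorem lintegral_popConv (h : (X →₀ ℕ) →+ ℝ≥0∞) :
    ∫⁻ a, h a ∂(popConv μ ν) = ∫⁻ a, h a ∂μ + ∫⁻ a, h a ∂ν := by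
  rw [popConv, lintegral_map (measurable_of_countable _) (measurable_of_countable _),
    lintegral_prod _ (measurable_of_countable _).aemeasurable]
  simp only [map_add]
  simp [lintegral_add_left measurable_const, lintegral_add_right _ measurable_const]

theorem integral_popConv (h : (X →₀ ℕ) →+ ℝ) (hμ : Integrable h μ) (hν : Integrable h ν) :
    ∫ a, h a ∂(popConv μ ν) = ∫ a, h a ∂μ + ∫ a, h a ∂ν := by
  rw [popConv, integral_map (measurable_of_countable _).aemeasurable
    (measurable_of_countable _).aestronglyMeasurable]
  simp only [map_add]
  rw [integral_add (hμ.comp_fst ν) (hν.comp_snd μ), integral_fun_fst, integral_fun_snd]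
  simp

end Convolution

theorem natCast_popSize_eq_tsum (m : X →₀ ℕ) : (popSize m : ℝ≥0∞) = ∑' y, (m y : ℝ≥0∞) := by
  rw [tsum_eq_sum (s := m.support) fun y hy => by simp [Finsupp.notMem_support_iff.mp hy]]
  simp [popSize, Finsupp.sum, Nat.cast_sum]

theorem pairing_eq_tsum (f : X → ℝ) (m : X →₀ ℕ) : pairing f m = ∑' y, (m y : ℝ) * f y := by
  rw [tsum_eq_sum (s := m.support) fun y hy => by simp [Finsupp.notMem_support_iff.mp hy]]
  rfl

theorem abs_pairing_le {f : X → ℝ} {C : ℝ} (hf : ∀ x, |f x| ≤ C) (m : X →₀ ℕ) :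
    |pairing f m| ≤ C * popSize m := by
  rw [natCast_popSize, pairing_apply, pairing_apply, Finsupp.mul_sum]
  refine (Finset.abs_sum_le_sum_abs _ _).trans (Finset.sum_le_sum fun x _ => ?_)
  simp only [abs_mul, Nat.abs_cast, mul_one, mul_comm C]
  gcongr
  exact hf x

section Moments

variable [Countable X]

theorem integrable_pairing {μ : Measure (X →₀ ℕ)} (hμ : ∫⁻ a, (popSize a : ℝ≥0∞) ∂μ ≠ ∞)
    {f : X → ℝ} {C : ℝ} (hf : ∀ x, |f x| ≤ C) : Integrable (pairing f) μ := by
  have hsize : Integrable (fun a => (popSize a : ℝ)) μ := by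
    simpa using integrable_toReal_of_lintegral_ne_top (measurable_of_countable _).aemeasurable hμ
  exact (hsize.const_mul C).mono' (measurable_of_countable _).aestronglyMeasurable
    (ae_of_all _ fun a => abs_pairing_le hf a)

theorem integral_pairing_eq_tsum {μ : Measure (X →₀ ℕ)} (hμ : ∫⁻ a, (popSize a : ℝ≥0∞) ∂μ ≠ ∞)
    {f : X → ℝ} {C : ℝ} (hf : ∀ x, |f x| ≤ C) :
    ∫ a, pairing f a ∂μ = ∑' y, (∫⁻ a, (a y : ℝ≥0∞) ∂μ).toReal * f y := by
  have hfin : ∑' y, ∫⁻ a, ‖(a y : ℝ) * f y‖ₑ ∂μ ≠ ∞ := by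
    refine ne_top_of_le_ne_top (ENNReal.mul_ne_top (ENNReal.ofReal_ne_top (r := C)) hμ) ?_
    calc ∑' y, ∫⁻ a, ‖(a y : ℝ) * f y‖ₑ ∂μ
        ≤ ∑' y, ∫⁻ a, ENNReal.ofReal C * (a y : ℝ≥0∞) ∂μ := by
          refine ENNReal.tsum_le_tsum fun y => lintegral_mono fun a => ?_
          rw [enorm_mul, mul_comm, Real.enorm_natCast, Real.enorm_eq_ofReal_abs]
          exact mul_le_mul_left (ENNReal.ofReal_le_ofReal (hf y)) _
      _ = ENNReal.ofReal C * ∫⁻ a, (popSize a : ℝ≥0∞) ∂μ := by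
          simp_rw [natCast_popSize_eq_tsum]
          rw [lintegral_tsum fun y => (measurable_of_countable _).aemeasurable,
            ← ENNReal.tsum_mul_left]
          exact tsum_congr fun y => lintegral_const_mul _ (measurable_of_countable _)
  simp_rw [pairing_eq_tsum]
  rw [integral_tsum (fun y => (measurable_of_countable _).aestronglyMeasurable) hfin]
  refine tsum_congr fun y => ?_
  rw [integral_mul_const, integral_eq_lintegral_of_nonneg_ae (ae_of_all _ fun a => by positivity)
    (measurable_of_countable _).aestronglyMeasurable]
  simp

variable {K : Kernel (X →₀ ℕ) (X →₀ ℕ)} [IsMarkovKernel K]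

theorem IsBranchingKernel.lintegral_addHom (hK : IsBranchingKernel K) (h : (X →₀ ℕ) →+ ℝ≥0∞)
    (m : X →₀ ℕ) :
    ∫⁻ a, h a ∂(K m) = m.sum fun x k => k • ∫⁻ a, h a ∂(K (Finsupp.single x 1)) :=
  hK.apply_eq_sum (fun μ => ∫⁻ a, h a ∂μ) (by simp) (fun _ _ => lintegral_popConv _ _ h) m

theorem IsBranchingKernel.integral_addHom (hK : IsBranchingKernel K) (h : (X →₀ ℕ) →+ ℝ)
    (hh : ∀ m, Integrable h (K m)) (m : X →₀ ℕ) :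
    ∫ a, h a ∂(K m) = m.sum fun x k => k • ∫ a, h a ∂(K (Finsupp.single x 1)) :=
  hK.apply_eq_sum (fun μ => ∫ a, h a ∂μ) (by simp)
    (fun m m' => integral_popConv _ _ h (hh m) (hh m')) m

theorem IsBranchingKernel.lintegral_popSize (hK : IsBranchingKernel K) {r : ℝ≥0∞}
    (hr : ∀ x, ∫⁻ a, (popSize a : ℝ≥0∞) ∂(K (Finsupp.single x 1)) = r) (m : X →₀ ℕ) :
    ∫⁻ a, (popSize a : ℝ≥0∞) ∂(K m) = r * popSize m := by
  have h := hK.lintegral_addHom (pairing fun _ => (1 : ℝ≥0∞)) m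
  simp only [← natCast_popSize, hr] at h
  rw [h, natCast_popSize, pairing_apply, Finsupp.mul_sum]
  simp [mul_comm]

theorem IsBranchingKernel.integral_pairing_of_harmonic (hK : IsBranchingKernel K) {ρ : ℝ}
    (hρ : 0 < ρ) (hBR : ∀ x, ∫⁻ a, (popSize a : ℝ≥0∞) ∂(K (Finsupp.single x 1)) = ENNReal.ofReal ρ)
    {f g : X → ℝ} {C : ℝ} (hf : ∀ x, |f x| ≤ C)
    (hharm : ∀ x, g x =
      ∑' y, ((∫⁻ a, (a y : ℝ≥0∞) ∂(K (Finsupp.single x 1))).toReal / ρ) * f y)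
    (m : X →₀ ℕ) :
    ∫ a, pairing f a ∂(K m) = ρ * pairing g m := by
  have hfin : ∀ m, ∫⁻ a, (popSize a : ℝ≥0∞) ∂(K m) ≠ ∞ := fun m => by
    rw [hK.lintegral_popSize hBR]
    exact ENNReal.mul_ne_top ENNReal.ofReal_ne_top (ENNReal.natCast_ne_top _)
  have hmean : ∀ x, ∫ a, pairing f a ∂(K (Finsupp.single x 1)) = ρ * g x := fun x => by
    rw [integral_pairing_eq_tsum (hfin _) hf, hharm, ← tsum_mul_left]
    exact tsum_congr fun y => by field_simp
  rw [hK.integral_addHom _ (fun m => integrable_pairing (hfin m) hf), pairing_apply,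
    Finsupp.mul_sum]
  simp only [hmean, nsmul_eq_mul]
  exact Finsupp.sum_congr fun x _ => by ring

end Moments

def IsMarkovChainLaw {α : Type*} [MeasurableSpace α] [DecidableEq α] (K : Kernel α α) (m : α)
    (μ : Measure (ℕ → α)) : Prop :=
  ∀ (n : ℕ) (path : ℕ → α), μ {ω | ∀ i ≤ n, ω i = path i}
    = (if path 0 = m then 1 else 0) * ∏ i ∈ Finset.range n, K (path i) {path (i + 1)}

def trajPrefix {α : Type*} (n : ℕ) (ω : ℕ → α) : Fin (n + 1) → α := fun i => ω i

theorem trajPrefix_succ {α : Type*} (n : ℕ) (ω : ℕ → α) :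
    trajPrefix (n + 1) ω = Fin.snoc (trajPrefix n ω) (ω (n + 1)) :=
  (Fin.snoc_init_self _).symm

section Trajectories

variable {α : Type*} [MeasurableSpace α]

theorem measurable_trajPrefix (n : ℕ) : Measurable (trajPrefix (α := α) n) :=
  measurable_pi_lambda _ fun i => measurable_pi_apply (i : ℕ)

theorem coordFil_le_comap_trajPrefix (n : ℕ) :
    coordFil α n ≤ MeasurableSpace.comap (trajPrefix n) MeasurableSpace.pi := by
  refine iSup₂_le fun i (hi : i ≤ n) => ?_
  rw [show (fun ω : ℕ → α => ω i) = (fun u => u ⟨i, by omega⟩) ∘ trajPrefix n from rfl,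
    ← MeasurableSpace.comap_comp]
  exact MeasurableSpace.comap_mono (measurable_pi_apply _).comap_le

theorem measurable_eval_coordFil (n : ℕ) : Measurable[coordFil α n] fun ω : ℕ → α => ω n :=
  measurable_iff_comap_le.mpr (le_biSup (fun i => MeasurableSpace.comap (fun ω : ℕ → α => ω i) _)
    (Set.mem_Iic.mpr le_rfl))

variable [MeasurableSingletonClass α] [DecidableEq α] {K : Kernel α α} {m : α} {μ : Measure (ℕ → α)}

theorem IsMarkovChainLaw.map_trajPrefix_singleton (hμ : IsMarkovChainLaw K m μ) (n : ℕ)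
    (u : Fin (n + 1) → α) :
    μ.map (trajPrefix n) {u}
      = (if u 0 = m then 1 else 0) * ∏ i : Fin n, K (u i.castSucc) {u i.succ} := by
  set path : ℕ → α := fun i => u ⟨min i n, by omega⟩
  have hpath : ∀ i : Fin (n + 1), path i = u i := fun i => congrArg u (Fin.ext (by simp; omega))
  have hpre : trajPrefix n ⁻¹' {u} = {ω | ∀ i ≤ n, ω i = path i} := by
    ext ω
    simp only [Set.mem_preimage, Set.mem_singleton_iff, Set.mem_ofPred_eq, funext_iff, trajPrefix]
    refine ⟨fun h i hi => ?_, fun h i => ?_⟩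
    · simpa [hpath ⟨i, by omega⟩] using h ⟨i, by omega⟩
    · rw [h i (by omega), hpath]
  rw [Measure.map_apply (measurable_trajPrefix n) (measurableSet_singleton u), hpre, hμ,
    ← Fin.prod_univ_eq_prod_range]
  congr 2
  funext i
  rw [show path i = u i.castSucc from hpath i.castSucc,
    show path (i + 1) = u i.succ from hpath i.succ]

variable [Countable α]

theorem IsMarkovChainLaw.map_eval_zero (hμ : IsMarkovChainLaw K m μ) :
    μ.map (fun ω => ω 0) = Measure.dirac m := by
  refine Measure.ext_of_singleton fun a => ?_
  have hpre : (fun ω : ℕ → α => ω 0) ⁻¹' {a} = {ω | ∀ i ≤ 0, ω i = (fun _ => a) i} := by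
    ext ω
    simp
  rw [Measure.map_apply (measurable_pi_apply 0) (measurableSet_singleton a), hpre, hμ,
    Measure.dirac_apply]
  simp [Set.indicator, eq_comm]

variable [IsSFiniteKernel K]

theorem IsMarkovChainLaw.map_trajPrefix_eval_succ (hμ : IsMarkovChainLaw K m μ)
    [SFinite μ] (n : ℕ) :
    μ.map (fun ω => (trajPrefix n ω, ω (n + 1)))
      = μ.map (trajPrefix n) ⊗ₘ K.comap (fun u => u (Fin.last n)) (measurable_pi_apply _) := by
  refine Measure.ext_of_singleton fun ⟨u, a⟩ => ?_
  have hpre : (fun ω => (trajPrefix n ω, ω (n + 1))) ⁻¹' {(u, a)}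
      = trajPrefix (n + 1) ⁻¹' {Fin.snoc u a} := by
    ext ω
    simp [trajPrefix_succ, Fin.snoc_inj]
  rw [Measure.map_apply ((measurable_trajPrefix n).prodMk (measurable_pi_apply _))
      (measurableSet_singleton _), hpre,
    ← Measure.map_apply (measurable_trajPrefix _) (measurableSet_singleton _),
    ← Set.singleton_prod_singleton,
    Measure.compProd_apply_prod (measurableSet_singleton u) (measurableSet_singleton a),
    lintegral_singleton, hμ.map_trajPrefix_singleton, hμ.map_trajPrefix_singleton,
    Fin.prod_univ_castSucc]
  simp only [Fin.succ_castSucc, Fin.snoc_castSucc]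
  simp [Kernel.comap_apply, mul_comm]

theorem IsMarkovChainLaw.lintegral_eval_succ (hμ : IsMarkovChainLaw K m μ) [SFinite μ]
    (n : ℕ) (Ψ : α → ℝ≥0∞) :
    ∫⁻ ω, Ψ (ω (n + 1)) ∂μ = ∫⁻ ω, ∫⁻ a, Ψ a ∂(K (ω n)) ∂μ := by
  have h := lintegral_map (f := fun p : (Fin (n + 1) → α) × α => Ψ p.2)
    (measurable_of_countable _) ((measurable_trajPrefix n).prodMk (measurable_pi_apply (n + 1)))
    (μ := μ)
  rw [hμ.map_trajPrefix_eval_succ, Measure.lintegral_compProd (measurable_of_countable _),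
    lintegral_map (measurable_of_countable _) (measurable_trajPrefix n)] at h
  exact h.symm

theorem IsMarkovChainLaw.setIntegral_eval_succ (hμ : IsMarkovChainLaw K m μ) [SFinite μ]
    (n : ℕ) (S : Set (Fin (n + 1) → α)) {Ψ : α → ℝ}
    (hΨ : Integrable Ψ (μ.map fun ω => ω (n + 1))) :
    ∫ ω in trajPrefix n ⁻¹' S, Ψ (ω (n + 1)) ∂μ
      = ∫ ω in trajPrefix n ⁻¹' S, ∫ a, Ψ a ∂(K (ω n)) ∂μ := by
  have hS : MeasurableSet S := (Set.to_countable S).measurableSet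
  have hpair : Measurable fun ω : ℕ → α => (trajPrefix n ω, ω (n + 1)) :=
    (measurable_trajPrefix n).prodMk (measurable_pi_apply _)
  set G : (Fin (n + 1) → α) × α → ℝ := fun p => S.indicator (fun _ => Ψ p.2) p.1
  have hG : Integrable G (μ.map fun ω => (trajPrefix n ω, ω (n + 1))) := by
    rw [integrable_map_measure (measurable_of_countable _).aestronglyMeasurable hpair.aemeasurable]
    have hΨ' := (integrable_map_measure (measurable_of_countable Ψ).aestronglyMeasurable
      (measurable_pi_apply (n + 1)).aemeasurable).mp hΨ
    exact hΨ'.indicator (measurable_trajPrefix n hS)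
  rw [← integral_indicator (measurable_trajPrefix n hS),
    ← integral_indicator (measurable_trajPrefix n hS)]
  calc ∫ ω, (trajPrefix n ⁻¹' S).indicator (fun ω => Ψ (ω (n + 1))) ω ∂μ
      = ∫ p, G p ∂(μ.map fun ω => (trajPrefix n ω, ω (n + 1))) := by
        rw [integral_map hpair.aemeasurable (measurable_of_countable _).aestronglyMeasurable]
        rfl
    _ = ∫ u, S.indicator (fun u => ∫ a, Ψ a ∂(K (u (Fin.last n)))) u ∂(μ.map (trajPrefix n)) := by
        rw [hμ.map_trajPrefix_eval_succ] at hG ⊢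
        rw [Measure.integral_compProd hG]
        refine integral_congr_ae (ae_of_all _ fun u => ?_)
        by_cases hu : u ∈ S <;> simp [G, hu, Kernel.comap_apply]
    _ = ∫ ω, (trajPrefix n ⁻¹' S).indicator (fun ω => ∫ a, Ψ a ∂(K (ω n))) ω ∂μ := by
        rw [integral_map (measurable_trajPrefix n).aemeasurable
          (measurable_of_countable _).aestronglyMeasurable]
        rfl

theorem IsMarkovChainLaw.lintegral_eval_eq_pow_mul (hμ : IsMarkovChainLaw K m μ) [SFinite μ]
    {Ψ : α → ℝ≥0∞} {r : ℝ≥0∞} (hΨ : ∀ b, ∫⁻ a, Ψ a ∂(K b) = r * Ψ b) (n : ℕ) :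
    ∫⁻ ω, Ψ (ω n) ∂μ = r ^ n * Ψ m := by
  induction n with
  | zero =>
    rw [← lintegral_map (measurable_of_countable Ψ) (measurable_pi_apply 0), hμ.map_eval_zero,
      lintegral_dirac]
    simp
  | succ n ih =>
    have hΨn : Measurable fun ω : ℕ → α => Ψ (ω n) :=
      (measurable_of_countable Ψ).comp (measurable_pi_apply n)
    simp_rw [hμ.lintegral_eval_succ, hΨ]
    rw [lintegral_const_mul _ hΨn, ih, pow_succ, mul_comm _ r, mul_assoc]

theorem IsMarkovChainLaw.martingale_of_spaceTimeHarmonic (hμ : IsMarkovChainLaw K m μ)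
    [IsFiniteMeasure μ] {g : ℕ → α → ℝ} (hint : ∀ n, Integrable (g n) (μ.map fun ω => ω n))
    (hharm : ∀ n b, ∫ a, g (n + 1) a ∂(K b) = g n b) :
    Martingale (fun n ω => g n (ω n)) (coordFil α) μ := by
  refine martingale_of_setIntegral_eq_succ
    (fun n => ((measurable_of_countable _).comp (measurable_eval_coordFil n)).stronglyMeasurable)
    (fun n => (integrable_map_measure (measurable_of_countable _).aestronglyMeasurable
      (measurable_pi_apply n).aemeasurable).mp (hint n)) fun n s hs => ?_
  obtain ⟨S, -, rfl⟩ := coordFil_le_comap_trajPrefix n s hs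
  simp_rw [hμ.setIntegral_eval_succ n S (hint (n + 1)), hharm]

end Trajectories

theorem harmonic_martingale_general [Countable X]
    (Pibr : X → Measure (X →₀ ℕ))
    (K : Kernel (X →₀ ℕ) (X →₀ ℕ)) [IsMarkovKernel K]
    (hK0 : K 0 = Measure.dirac 0)
    (hKs : ∀ x : X, K (Finsupp.single x 1) = Pibr x)
    (hKadd : ∀ m m' : X →₀ ℕ, K (m + m') = popConv (K m) (K m'))
    (ρ : ℝ) (hρ : 1 < ρ)
    (hBR : ∀ x : X, ∫⁻ m, (popSize m : ℝ≥0∞) ∂(Pibr x) = ENNReal.ofReal ρ)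
    (f : ℕ → X → ℝ) (C : ℝ) (hbd : ∀ (n : ℕ) (x : X), |f n x| ≤ C)
    -- space-time harmonicity for the base chain with p(x,y) = π̄_{x,y}/ρ
    (hharm : ∀ (n : ℕ) (x : X),
      f n x = ∑' y : X, ((∫⁻ m, (m y : ℝ≥0∞) ∂(Pibr x)).toReal / ρ) * f (n + 1) y)
    (P : (X →₀ ℕ) → Measure (ℕ → X →₀ ℕ)) (hPprob : ∀ m, IsProbabilityMeasure (P m))
    (hP : ∀ (m : X →₀ ℕ) (n : ℕ) (path : ℕ → X →₀ ℕ),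
      P m {ω | ∀ i ≤ n, ω i = path i}
        = (if path 0 = m then 1 else 0) * ∏ i ∈ Finset.range n, K (path i) {path (i + 1)}) :
    (∀ (m : X →₀ ℕ) (n : ℕ),
      ∫ m', (1 / ρ ^ (n + 1)) * (m'.sum fun x k => (k : ℝ) * f (n + 1) x) ∂(K m)
        = (1 / ρ ^ n) * (m.sum fun x k => (k : ℝ) * f n x)) ∧
    ∀ m : X →₀ ℕ,
      Martingale
        (fun (n : ℕ) (ω : ℕ → X →₀ ℕ) => (1 / ρ ^ n) * ((ω n).sum fun x k => (k : ℝ) * f n x))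
        (coordFil (X →₀ ℕ)) (P m) := by
  have hK : IsBranchingKernel K := ⟨hK0, hKadd⟩
  simp only [← hKs] at hBR hharm
  have hρ0 : 0 < ρ := zero_lt_one.trans hρ
  have hstep : ∀ m n, ∫ a, 1 / ρ ^ (n + 1) * pairing (f (n + 1)) a ∂(K m)
      = 1 / ρ ^ n * pairing (f n) m := fun m n => by
    rw [integral_const_mul, hK.integral_pairing_of_harmonic hρ0 hBR (hbd (n + 1)) (hharm n),
      pow_succ]
    field_simp
  refine ⟨hstep, fun m => ?_⟩
  have hμ : IsMarkovChainLaw K m (P m) := hP m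
  refine hμ.martingale_of_spaceTimeHarmonic (g := fun n a => 1 / ρ ^ n * pairing (f n) a)
    (fun n => ?_) fun n b => hstep b n
  have hsize : ∫⁻ a, (popSize a : ℝ≥0∞) ∂((P m).map fun ω => ω n) ≠ ∞ := by
    rw [lintegral_map (measurable_of_countable _) (measurable_pi_apply n),
      hμ.lintegral_eval_eq_pow_mul (hK.lintegral_popSize hBR) n]
    exact ENNReal.mul_ne_top (ENNReal.pow_ne_top ENNReal.ofReal_ne_top) (ENNReal.natCast_ne_top _)
  exact (integrable_pairing hsize (hbd n)).const_mul _

/-- Corollary 4.7, harmonic martingales. Under (BR) with `ρ ∈ (1,∞)`,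
for a uniformly bounded space-time harmonic sequence `(f_n)` of the base chain, the
functions `g_n(m) = ρ^{−n}·⟨m, f_n⟩` satisfy `∫ g_{n+1} dK(m) = g_n(m)`, and for every
initial population the sequence `W^f_n = ρ^{−n}·⟨M_n, f_n⟩` is a martingale under `ℙ_m`. -/
theorem harmonic_martingale [Countable X]
    (Pibr : X → Measure (X →₀ ℕ)) (hPibr : ∀ x, IsProbabilityMeasure (Pibr x))
    (K : Kernel (X →₀ ℕ) (X →₀ ℕ)) [IsMarkovKernel K]
    (hK0 : K 0 = Measure.dirac 0)
    (hKs : ∀ x : X, K (Finsupp.single x 1) = Pibr x)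
    (hKadd : ∀ m m' : X →₀ ℕ, K (m + m') = popConv (K m) (K m'))
    (ρ : ℝ) (hρ : 1 < ρ)
    (hBR : ∀ x : X, ∫⁻ m, (popSize m : ℝ≥0∞) ∂(Pibr x) = ENNReal.ofReal ρ)
    (f : ℕ → X → ℝ) (C : ℝ) (hbd : ∀ (n : ℕ) (x : X), |f n x| ≤ C)
    -- space-time harmonicity for the base chain with p(x,y) = π̄_{x,y}/ρ
    (hharm : ∀ (n : ℕ) (x : X),
      f n x = ∑' y : X, ((∫⁻ m, (m y : ℝ≥0∞) ∂(Pibr x)).toReal / ρ) * f (n + 1) y)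
    (P : (X →₀ ℕ) → Measure (ℕ → X →₀ ℕ)) (hPprob : ∀ m, IsProbabilityMeasure (P m))
    (hP : ∀ (m : X →₀ ℕ) (n : ℕ) (path : ℕ → X →₀ ℕ),
      P m {ω | ∀ i ≤ n, ω i = path i}
        = (if path 0 = m then 1 else 0) * ∏ i ∈ Finset.range n, K (path i) {path (i + 1)}) :
    (∀ (m : X →₀ ℕ) (n : ℕ),
      ∫ m', (1 / ρ ^ (n + 1)) * (m'.sum fun x k => (k : ℝ) * f (n + 1) x) ∂(K m)
        = (1 / ρ ^ n) * (m.sum fun x k => (k : ℝ) * f n x)) ∧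
    ∀ m : X →₀ ℕ,
      Martingale
        (fun (n : ℕ) (ω : ℕ → X →₀ ℕ) => (1 / ρ ^ n) * ((ω n).sum fun x k => (k : ℝ) * f n x))
        (coordFil (X →₀ ℕ)) (P m) :=
  harmonic_martingale_general Pibr K hK0 hKs hKadd ρ hρ hBR f C hbd hharm P hPprob hP

end BMC
end
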